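/- arXiv:2002.05317 — 5 statements merged into one kernel-verified Lean document; each statement's English description precedes it below -/
import Mathlib

section
/- For any undirected graph with non-negative edge weights, boundary vertices colored by parties, and discrete entropy defined via minimal cuts, the discrete entropy satisfies subadditivity: S(I) + S(J) ≥ S(I ∪ J) for disjoint subsets I, J of parties. -/
/-- Cut weight of a cut `W` in an undirected weighted graph: total weight of
edges with one endpoint in `W` and one in its complement (the symmetric weight
function counts each cut edge exactly once over ordered pairs `(u,v)` with
`u ∈ W`, `v ∉ W`). -/
noncomputable def cutWeight {V : Type} [Fintype V] [DecidableEq V]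
    (w : V → V → ℝ) (W : Finset V) : ℝ :=
  ∑ u ∈ W, ∑ v ∈ Wᶜ, w u v

/-- Discrete (min-cut) entropy of a subset `I ⊆ [n]` of parties, for a graph
model with boundary vertices colored by `[n+1]` (`none` = bulk vertex).  It is
the infimum of cut weights over cuts whose boundary part is exactly the set of
boundary vertices colored by elements of `I`. -/
noncomputable def discreteEntropy {V : Type} [Fintype V] [DecidableEq V] {n : ℕ}
    (w : V → V → ℝ) (boundary : V → Option (Fin (n + 1))) (I : Finset (Fin n)) : ℝ :=
  sInf { c : ℝ | ∃ W : Finset V,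
    (∀ v j, boundary v = some j → (v ∈ W ↔ ∃ i ∈ I, Fin.castSucc i = j)) ∧
    c = cutWeight w W }

lemma cutWeight_nonneg {V : Type} [Fintype V] [DecidableEq V]
    (w : V → V → ℝ) (hw : ∀ u v, 0 ≤ w u v) (W : Finset V) : 0 ≤ cutWeight w W := by
  unfold cutWeight
  exact Finset.sum_nonneg fun u _ => Finset.sum_nonneg fun v _ => hw u v

lemma cutWeight_union_le {V : Type} [Fintype V] [DecidableEq V]
    (w : V → V → ℝ) (hw : ∀ u v, 0 ≤ w u v) (A B : Finset V) :
    cutWeight w (A ∪ B) ≤ cutWeight w A + cutWeight w B := by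
  unfold cutWeight
  have hsub : ∀ (C : Finset V), C ⊆ A ∪ B →
      ∀ u, ∑ v ∈ (A ∪ B)ᶜ, w u v ≤ ∑ v ∈ Cᶜ, w u v := by
    intro C hC u
    exact Finset.sum_le_sum_of_subset_of_nonneg (Finset.compl_subset_compl.2 hC)
      (fun v _ _ => hw u v)
  have h1 : ∑ u ∈ A ∪ B, ∑ v ∈ (A ∪ B)ᶜ, w u v ≤
      ∑ u ∈ A, ∑ v ∈ (A ∪ B)ᶜ, w u v + ∑ u ∈ B, ∑ v ∈ (A ∪ B)ᶜ, w u v := by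
    have := Finset.sum_union_inter (s₁ := A) (s₂ := B)
      (f := fun u => ∑ v ∈ (A ∪ B)ᶜ, w u v)
    have hnn : 0 ≤ ∑ u ∈ A ∩ B, ∑ v ∈ (A ∪ B)ᶜ, w u v :=
      Finset.sum_nonneg fun u _ => Finset.sum_nonneg fun v _ => hw u v
    linarith
  have h2 : ∑ u ∈ A, ∑ v ∈ (A ∪ B)ᶜ, w u v ≤ ∑ u ∈ A, ∑ v ∈ Aᶜ, w u v :=
    Finset.sum_le_sum fun u _ => hsub A Finset.subset_union_left u
  have h3 : ∑ u ∈ B, ∑ v ∈ (A ∪ B)ᶜ, w u v ≤ ∑ u ∈ B, ∑ v ∈ Bᶜ, w u v :=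
    Finset.sum_le_sum fun u _ => hsub B Finset.subset_union_right u
  linarith

/-- Subadditivity of the discrete entropy on graph models:
`S(I) + S(J) ≥ S(I ∪ J)` for disjoint `I, J ⊆ [n]`. -/
theorem discreteEntropy_subadditive {V : Type} [Fintype V] [DecidableEq V] {n : ℕ}
    (w : V → V → ℝ) (hw : ∀ u v, 0 ≤ w u v) (hsym : ∀ u v, w u v = w v u)
    (boundary : V → Option (Fin (n + 1)))
    (I J : Finset (Fin n)) (hIJ : Disjoint I J) :
    discreteEntropy w boundary (I ∪ J) ≤
      discreteEntropy w boundary I + discreteEntropy w boundary J := by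
  classical
  set S : Finset (Fin n) → Set ℝ := fun K => { c : ℝ | ∃ W : Finset V,
    (∀ v j, boundary v = some j → (v ∈ W ↔ ∃ i ∈ K, Fin.castSucc i = j)) ∧
    c = cutWeight w W } with hS
  have hne : ∀ K : Finset (Fin n), (S K).Nonempty := by
    intro K
    refine ⟨_, ⟨Finset.univ.filter
      (fun v => ∃ i ∈ K, boundary v = some (Fin.castSucc i)), ?_, rfl⟩⟩
    intro v j hv
    simp only [Finset.mem_filter, Finset.mem_univ, true_and, hv, Option.some.injEq]
    exact ⟨fun ⟨i, hi, h⟩ => ⟨i, hi, h.symm⟩, fun ⟨i, hi, h⟩ => ⟨i, hi, h.symm⟩⟩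
  have hbdd : ∀ K : Finset (Fin n), BddBelow (S K) := by
    intro K
    refine ⟨0, fun c hc => ?_⟩
    obtain ⟨W, _, rfl⟩ := hc
    exact cutWeight_nonneg w hw W
  have key : ∀ a ∈ S I, ∀ b ∈ S J, sInf (S (I ∪ J)) ≤ a + b := by
    rintro a ⟨WI, hWI, rfl⟩ b ⟨WJ, hWJ, rfl⟩
    have hmem : cutWeight w (WI ∪ WJ) ∈ S (I ∪ J) := by
      refine ⟨WI ∪ WJ, ?_, rfl⟩
      intro v j hv
      simp only [Finset.mem_union, hWI v j hv, hWJ v j hv]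
      aesop
    exact le_trans (csInf_le (hbdd _) hmem) (cutWeight_union_le w hw WI WJ)
  have h1 : sInf (S (I ∪ J)) - sInf (S J) ≤ sInf (S I) := by
    apply le_csInf (hne I)
    intro a ha
    have : sInf (S (I ∪ J)) - a ≤ sInf (S J) := by
      apply le_csInf (hne J)
      intro b hb
      linarith [key a ha b hb]
    linarith
  show sInf (S (I ∪ J)) ≤ sInf (S I) + sInf (S J)
  linarith
end

section
/- Let f : {0,1}^L → {0,1}^R be a map that is a contraction from the α-weighted Hamming norm to the β-weighted Hamming norm (i.e., ‖x − x′‖_α ≥ ‖f(x) − f(x′)‖_β for all bit strings x, x′ of length L), and suppose f maps each occurrence vector x^(i) of the LHS of the entropy inequality ∑_l α_l S(I_l) ≥ ∑_r β_r S(J_r) to the corresponding occurrence vector y^(i) of the RHS, for all parties i ∈ [n+1]. Then the inequality holds for the discrete entropies of every weighted graph model. -/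
/-- The `α`-weighted Hamming norm of the difference of two bit strings. -/
def wHamming {m : ℕ} (α : Fin m → ℝ) (x y : Fin m → Bool) : ℝ :=
  ∑ l, α l * (if x l = y l then 0 else 1)

/-- Occurrence vector of party `i ∈ [n+1]` for a list of subsystems
`Is : Fin L → Finset (Fin n)`: the `l`-th bit is `1` iff `i ∈ I_l`
(the purifier `n+1` has all bits zero). -/
def occurrence {n L : ℕ} (Is : Fin L → Finset (Fin n)) (i : Fin (n + 1)) :
    Fin L → Bool :=
  fun l => decide (∃ i' ∈ Is l, Fin.castSucc i' = i)

section Aux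

variable {V : Type} [Fintype V] [DecidableEq V] {n : ℕ}

/-- The set of cut weights over which `discreteEntropy` takes the infimum. -/
def entropySet (w : V → V → ℝ) (boundary : V → Option (Fin (n + 1)))
    (I : Finset (Fin n)) : Set ℝ :=
  { c : ℝ | ∃ W : Finset V,
    (∀ v j, boundary v = some j → (v ∈ W ↔ ∃ i ∈ I, Fin.castSucc i = j)) ∧
    c = cutWeight w W }

lemma discreteEntropy_eq_sInf (w : V → V → ℝ) (boundary : V → Option (Fin (n + 1)))
    (I : Finset (Fin n)) :
    discreteEntropy w boundary I = sInf (entropySet w boundary I) := rfl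

lemma entropySet_nonempty (w : V → V → ℝ) (boundary : V → Option (Fin (n + 1)))
    (I : Finset (Fin n)) : (entropySet w boundary I).Nonempty := by
  classical
  refine ⟨cutWeight w (Finset.univ.filter fun v =>
      ∃ i ∈ I, boundary v = some (Fin.castSucc i)),
    Finset.univ.filter fun v => ∃ i ∈ I, boundary v = some (Fin.castSucc i), ?_, rfl⟩
  intro v j hv
  simp only [Finset.mem_filter, Finset.mem_univ, true_and, hv, Option.some_inj]
  constructor
  · rintro ⟨i, hi, h⟩; exact ⟨i, hi, h.symm⟩
  · rintro ⟨i, hi, h⟩; exact ⟨i, hi, h.symm⟩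

lemma entropySet_finite (w : V → V → ℝ) (boundary : V → Option (Fin (n + 1)))
    (I : Finset (Fin n)) : (entropySet w boundary I).Finite := by
  apply Set.Finite.subset (Set.finite_range (cutWeight w))
  rintro c ⟨W, -, rfl⟩
  exact ⟨W, rfl⟩

lemma discreteEntropy_mem (w : V → V → ℝ) (boundary : V → Option (Fin (n + 1)))
    (I : Finset (Fin n)) :
    ∃ W : Finset V,
      (∀ v j, boundary v = some j → (v ∈ W ↔ ∃ i ∈ I, Fin.castSucc i = j)) ∧
      discreteEntropy w boundary I = cutWeight w W :=
  (entropySet_nonempty w boundary I).csInf_mem (entropySet_finite w boundary I)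

lemma discreteEntropy_le (w : V → V → ℝ) (boundary : V → Option (Fin (n + 1)))
    (I : Finset (Fin n)) (W : Finset V)
    (hW : ∀ v j, boundary v = some j → (v ∈ W ↔ ∃ i ∈ I, Fin.castSucc i = j)) :
    discreteEntropy w boundary I ≤ cutWeight w W :=
  csInf_le (entropySet_finite w boundary I).bddBelow ⟨W, hW, rfl⟩

/-- Double counting: summing the edge weight over all ordered pairs crossing a
cut gives twice the cut weight (for symmetric weights). -/
lemma double_count (w : V → V → ℝ) (hsym : ∀ u v, w u v = w v u) (W : Finset V) :
    ∑ u : V, ∑ v : V,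
        w u v * (if decide (u ∈ W) = decide (v ∈ W) then (0 : ℝ) else 1)
      = 2 * cutWeight w W := by
  classical
  have split : ∀ g : V → V → ℝ, ∑ u : V, ∑ v : V, g u v =
      (∑ u ∈ W, ∑ v ∈ W, g u v) + (∑ u ∈ W, ∑ v ∈ Wᶜ, g u v) +
      ((∑ u ∈ Wᶜ, ∑ v ∈ W, g u v) + (∑ u ∈ Wᶜ, ∑ v ∈ Wᶜ, g u v)) := by
    intro g
    rw [← Finset.sum_add_sum_compl W (fun u => ∑ v : V, g u v)]
    congr 1 <;>
    · rw [← Finset.sum_add_distrib]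
      apply Finset.sum_congr rfl
      intro u _
      rw [← Finset.sum_add_sum_compl W (g u)]
  rw [show (∑ u : V, ∑ v : V, w u v *
      (if decide (u ∈ W) = decide (v ∈ W) then (0:ℝ) else 1)) =
      _ from split _]
  have h1 : ∑ u ∈ W, ∑ v ∈ W, w u v *
      (if decide (u ∈ W) = decide (v ∈ W) then (0:ℝ) else 1) = 0 := by
    apply Finset.sum_eq_zero; intro u hu
    apply Finset.sum_eq_zero; intro v hv
    simp [hu, hv]
  have h2 : ∑ u ∈ Wᶜ, ∑ v ∈ Wᶜ, w u v *
      (if decide (u ∈ W) = decide (v ∈ W) then (0:ℝ) else 1) = 0 := by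
    apply Finset.sum_eq_zero; intro u hu
    apply Finset.sum_eq_zero; intro v hv
    rw [Finset.mem_compl] at hu hv
    simp [hu, hv]
  have h3 : ∑ u ∈ W, ∑ v ∈ Wᶜ, w u v *
      (if decide (u ∈ W) = decide (v ∈ W) then (0:ℝ) else 1) = cutWeight w W := by
    apply Finset.sum_congr rfl; intro u hu
    apply Finset.sum_congr rfl; intro v hv
    rw [Finset.mem_compl] at hv
    simp [hu, hv]
  have h4 : ∑ u ∈ Wᶜ, ∑ v ∈ W, w u v *
      (if decide (u ∈ W) = decide (v ∈ W) then (0:ℝ) else 1) = cutWeight w W := by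
    rw [Finset.sum_comm]
    apply Finset.sum_congr rfl; intro u hu
    apply Finset.sum_congr rfl; intro v hv
    rw [Finset.mem_compl] at hv
    simp [hu, hv, hsym u v]
  rw [h1, h2, h3, h4]
  ring

end Aux

/-- Proof-by-contraction theorem: if `f : {0,1}^L → {0,1}^R` is a contraction
from the `α`-weighted to the `β`-weighted Hamming norm and maps each LHS
occurrence vector to the corresponding RHS occurrence vector, then the
inequality `∑ α_l S(I_l) ≥ ∑ β_r S(J_r)` holds for the discrete entropies of
every weighted graph model. -/
theorem contraction_implies_inequality {n L R : ℕ}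
    (α : Fin L → ℝ) (hα : ∀ l, 0 < α l)
    (β : Fin R → ℝ) (hβ : ∀ r, 0 < β r)
    (Is : Fin L → Finset (Fin n)) (Js : Fin R → Finset (Fin n))
    (f : (Fin L → Bool) → (Fin R → Bool))
    (hcontr : ∀ x x' : Fin L → Bool, wHamming β (f x) (f x') ≤ wHamming α x x')
    (hocc : ∀ i : Fin (n + 1), f (occurrence Is i) = occurrence Js i) :
    ∀ (V : Type) [Fintype V] [DecidableEq V]
      (w : V → V → ℝ), (∀ u v, 0 ≤ w u v) → (∀ u v, w u v = w v u) →
      ∀ boundary : V → Option (Fin (n + 1)),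
      ∑ r, β r * discreteEntropy w boundary (Js r) ≤
        ∑ l, α l * discreteEntropy w boundary (Is l) := by
  intro V _ _ w hw hsym boundary
  classical
  -- choose minimizing cuts for the LHS terms
  choose Wl hWlvalid hWleq using fun l => discreteEntropy_mem w boundary (Is l)
  -- bit string attached to each vertex
  set x : V → Fin L → Bool := fun v l => decide (v ∈ Wl l) with hxdef
  -- cuts for the RHS terms
  set W' : Fin R → Finset V :=
    fun r => Finset.univ.filter (fun v => f (x v) r = true) with hW'def
  have hmem' : ∀ r v, v ∈ W' r ↔ f (x v) r = true := by
    intro r v; simp [hW'def]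
  -- boundary vertices carry occurrence vectors
  have hxocc : ∀ v j, boundary v = some j → x v = occurrence Is j := by
    intro v j hv
    funext l
    exact decide_eq_decide.mpr (hWlvalid l v j hv)
  have hvalid' : ∀ r, ∀ v j, boundary v = some j →
      (v ∈ W' r ↔ ∃ i ∈ Js r, Fin.castSucc i = j) := by
    intro r v j hv
    rw [hmem', hxocc v j hv, hocc j]
    simp [occurrence]
  -- the key edge-wise inequality
  have key : ∑ r, β r * (2 * cutWeight w (W' r)) ≤
      ∑ l, α l * (2 * cutWeight w (Wl l)) := by
    have lhs_eq : ∑ r, β r * (2 * cutWeight w (W' r)) =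
        ∑ u : V, ∑ v : V, w u v * wHamming β (f (x u)) (f (x v)) := by
      have : ∀ r, β r * (2 * cutWeight w (W' r)) =
          ∑ u : V, ∑ v : V,
            β r * (w u v * (if f (x u) r = f (x v) r then (0:ℝ) else 1)) := by
        intro r
        rw [← double_count w hsym (W' r), Finset.mul_sum]
        apply Finset.sum_congr rfl; intro u _
        rw [Finset.mul_sum]
        apply Finset.sum_congr rfl; intro v _
        congr 2
        have hu : decide (u ∈ W' r) = f (x u) r := by
          simp [hmem']
        have hv : decide (v ∈ W' r) = f (x v) r := by
          simp [hmem']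
        rw [hu, hv]
      rw [Finset.sum_congr rfl fun r _ => this r, Finset.sum_comm]
      apply Finset.sum_congr rfl; intro u _
      rw [Finset.sum_comm]
      apply Finset.sum_congr rfl; intro v _
      rw [wHamming, Finset.mul_sum]
      apply Finset.sum_congr rfl; intro r _
      ring
    have rhs_eq : ∑ l, α l * (2 * cutWeight w (Wl l)) =
        ∑ u : V, ∑ v : V, w u v * wHamming α (x u) (x v) := by
      have : ∀ l, α l * (2 * cutWeight w (Wl l)) =
          ∑ u : V, ∑ v : V,
            α l * (w u v * (if x u l = x v l then (0:ℝ) else 1)) := by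
        intro l
        rw [← double_count w hsym (Wl l), Finset.mul_sum]
        apply Finset.sum_congr rfl; intro u _
        rw [Finset.mul_sum]
      rw [Finset.sum_congr rfl fun l _ => this l, Finset.sum_comm]
      apply Finset.sum_congr rfl; intro u _
      rw [Finset.sum_comm]
      apply Finset.sum_congr rfl; intro v _
      rw [wHamming, Finset.mul_sum]
      apply Finset.sum_congr rfl; intro l _
      ring
    rw [lhs_eq, rhs_eq]
    apply Finset.sum_le_sum; intro u _
    apply Finset.sum_le_sum; intro v _
    exact mul_le_mul_of_nonneg_left (hcontr (x u) (x v)) (hw u v)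
  -- conclude
  have step1 : ∑ r, β r * discreteEntropy w boundary (Js r) ≤
      ∑ r, β r * cutWeight w (W' r) := by
    apply Finset.sum_le_sum; intro r _
    exact mul_le_mul_of_nonneg_left
      (discreteEntropy_le w boundary (Js r) (W' r) (hvalid' r)) (hβ r).le
  have step2 : ∑ r, β r * cutWeight w (W' r) ≤
      ∑ l, α l * cutWeight w (Wl l) := by
    have h2 : (2:ℝ) * ∑ r, β r * cutWeight w (W' r) ≤
        2 * ∑ l, α l * cutWeight w (Wl l) := by
      calc (2:ℝ) * ∑ r, β r * cutWeight w (W' r)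
          = ∑ r, β r * (2 * cutWeight w (W' r)) := by
            rw [Finset.mul_sum]; apply Finset.sum_congr rfl; intro r _; ring
        _ ≤ ∑ l, α l * (2 * cutWeight w (Wl l)) := key
        _ = 2 * ∑ l, α l * cutWeight w (Wl l) := by
            rw [Finset.mul_sum]; apply Finset.sum_congr rfl; intro l _; ring
    linarith
  have step3 : ∑ l, α l * cutWeight w (Wl l) =
      ∑ l, α l * discreteEntropy w boundary (Is l) := by
    apply Finset.sum_congr rfl; intro l _
    rw [hWleq l]
  linarith
end

section
/- The occurrence vectors of the monogamy of mutual information inequality S(AB) + S(BC) + S(AC) ≥ S(A) + S(B) + S(C) + S(ABC) violate the i^4 contraction property: the four LHS occurrence bit strings x^A = (1,0,1), x^B = (1,1,0), x^C = (0,1,1), x^O = (0,0,0) have i^4 distance 3 (with unit weights), while their required RHS images y^A = (1,0,0,1), y^B = (0,1,0,1), y^C = (0,0,1,1), y^O = (0,0,0,0) have i^4 distance 4. Hence no contraction map proving MMI on 4-graphs exists. -/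
/-- The `k`-ary indicator function on `k` bits: `0` if all bits are equal,
`1` otherwise. -/
def ind {k : ℕ} (b : Fin k → Bool) : ℝ :=
  if ∀ i j, b i = b j then 0 else 1

/-- The `α`-weighted indicator function on `k` bit strings of length `m`:
`i^k_α(x^1,…,x^k) = ∑_l α_l · i^k(x^1_l,…,x^k_l)`. -/
def indW {k m : ℕ} (α : Fin m → ℝ) (x : Fin k → Fin m → Bool) : ℝ :=
  ∑ l, α l * ind (fun i => x i l)

/-- LHS occurrence vectors of MMI (terms `AB, BC, AC`):
`x^A = (1,0,1)`, `x^B = (1,1,0)`, `x^C = (0,1,1)`, `x^O = (0,0,0)`. -/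
def mmiLHS : Fin 4 → Fin 3 → Bool :=
  ![![true, false, true], ![true, true, false], ![false, true, true],
    ![false, false, false]]

/-- RHS occurrence vectors of MMI (terms `A, B, C, ABC`):
`y^A = (1,0,0,1)`, `y^B = (0,1,0,1)`, `y^C = (0,0,1,1)`, `y^O = (0,0,0,0)`. -/
def mmiRHS : Fin 4 → Fin 4 → Bool :=
  ![![true, false, false, true], ![false, true, false, true],
    ![false, false, true, true], ![false, false, false, false]]

/-- The occurrence vectors of MMI violate the `i^4` contraction property:
their unit-weight `i^4` distance is `3` on the LHS but `4` on the RHS; hence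
there is no contraction map (i.e. no `f` contracting the `i^4` distance) that
maps the LHS occurrence vectors to the RHS ones, so MMI cannot be proven by
contraction on 4-graphs. -/
theorem mmi_no_rank4_contraction :
    indW (fun _ : Fin 3 => (1 : ℝ)) mmiLHS = 3 ∧
    indW (fun _ : Fin 4 => (1 : ℝ)) mmiRHS = 4 ∧
    ¬ ∃ f : (Fin 3 → Bool) → (Fin 4 → Bool),
        (∀ x : Fin 4 → Fin 3 → Bool,
          indW (fun _ : Fin 4 => (1 : ℝ)) (fun i => f (x i)) ≤
            indW (fun _ : Fin 3 => (1 : ℝ)) x) ∧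
        (∀ i : Fin 4, f (mmiLHS i) = mmiRHS i) := by

  have hL : indW (fun _ : Fin 3 => (1 : ℝ)) mmiLHS = 3 := by
    simp [indW, ind, mmiLHS, Fin.sum_univ_succ, Fin.forall_fin_succ]
    norm_num
  have hR : indW (fun _ : Fin 4 => (1 : ℝ)) mmiRHS = 4 := by
    simp [indW, ind, mmiRHS, Fin.sum_univ_succ, Fin.forall_fin_succ]
    norm_num
  refine ⟨hL, hR, ?_⟩
  rintro ⟨f, hcon, hmap⟩
  have h := hcon mmiLHS
  have he : (fun i => f (mmiLHS i)) = mmiRHS := funext hmap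
  rw [he, hL, hR] at h
  norm_num at h
end

section
/- Any entropy vector realizable by a hypergraph model on n parties is realizable by a hypergraph model with at most 2^(2^n − 1) vertices, where the vertex set is indexed by bit strings of length 2^n − 1, boundary vertices are the occurrence bit strings of the parties, and hyperedge weights are obtained by aggregating the original hyperedge weights over the partition induced by intersections of minimal cuts. -/
noncomputable def hCutWeight {V : Type} [Fintype V] [DecidableEq V]
    (w : Finset V → ℝ) (W : Finset V) : ℝ :=
  ∑ e : Finset V, if (e ∩ W).Nonempty ∧ (e \ W).Nonempty then w e else 0

/-- Discrete (min-cut) entropy of `I ⊆ [n]` in a hypergraph model on `n`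
parties, with boundary vertices colored by `[n+1]` (`none` = bulk vertex). -/
noncomputable def hDiscreteEntropy {V : Type} [Fintype V] [DecidableEq V] {n : ℕ}
    (w : Finset V → ℝ) (boundary : V → Option (Fin (n + 1)))
    (I : Finset (Fin n)) : ℝ :=
  sInf { c : ℝ | ∃ W : Finset V,
    (∀ v j, boundary v = some j → (v ∈ W ↔ ∃ i ∈ I, Fin.castSucc i = j)) ∧
    c = hCutWeight w W }

section Aux

variable {V : Type} [Fintype V] [DecidableEq V] {n : ℕ}

/-- Validity of a cut `W` for the region `I`. -/
def hValid (boundary : V → Option (Fin (n + 1))) (I : Finset (Fin n)) (W : Finset V) : Prop :=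
  ∀ v j, boundary v = some j → (v ∈ W ↔ ∃ i ∈ I, Fin.castSucc i = j)

lemma hEntropySet_eq (w : Finset V → ℝ) (boundary : V → Option (Fin (n + 1)))
    (I : Finset (Fin n)) :
    { c : ℝ | ∃ W : Finset V,
        (∀ v j, boundary v = some j → (v ∈ W ↔ ∃ i ∈ I, Fin.castSucc i = j)) ∧
        c = hCutWeight w W }
      = {c : ℝ | ∃ W : Finset V, hValid boundary I W ∧ c = hCutWeight w W} := rfl

lemma hEntropySet_finite (w : Finset V → ℝ) (boundary : V → Option (Fin (n + 1)))
    (I : Finset (Fin n)) :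
    ({c : ℝ | ∃ W : Finset V, hValid boundary I W ∧ c = hCutWeight w W}).Finite := by
  have hsub : {c : ℝ | ∃ W : Finset V, hValid boundary I W ∧ c = hCutWeight w W}
      ⊆ (hCutWeight w) '' Set.univ := by
    rintro c ⟨W, -, rfl⟩
    exact ⟨W, trivial, rfl⟩
  exact (Set.toFinite _).subset hsub

lemma hEntropySet_nonempty (w : Finset V → ℝ) (boundary : V → Option (Fin (n + 1)))
    (I : Finset (Fin n)) :
    ({c : ℝ | ∃ W : Finset V, hValid boundary I W ∧ c = hCutWeight w W}).Nonempty := by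
  classical
  refine ⟨_, Finset.univ.filter (fun v => ∃ i ∈ I, boundary v = some (Fin.castSucc i)), ?_, rfl⟩
  intro v j hj
  simp only [Finset.mem_filter, Finset.mem_univ, true_and, hj, Option.some.injEq]
  exact ⟨fun ⟨i, hi, h⟩ => ⟨i, hi, h.symm⟩, fun ⟨i, hi, h⟩ => ⟨i, hi, h.symm⟩⟩

lemma hEntropy_le (w : Finset V → ℝ) (boundary : V → Option (Fin (n + 1)))
    (I : Finset (Fin n)) (W : Finset V) (hW : hValid boundary I W) :
    hDiscreteEntropy w boundary I ≤ hCutWeight w W := by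
  have : hDiscreteEntropy w boundary I
      = sInf {c : ℝ | ∃ W : Finset V, hValid boundary I W ∧ c = hCutWeight w W} := rfl
  rw [this]
  exact csInf_le (hEntropySet_finite w boundary I).bddBelow ⟨W, hW, rfl⟩

lemma hEntropy_exists_min (w : Finset V → ℝ) (boundary : V → Option (Fin (n + 1)))
    (I : Finset (Fin n)) :
    ∃ W : Finset V, hValid boundary I W ∧
      hDiscreteEntropy w boundary I = hCutWeight w W := by
  have heq : hDiscreteEntropy w boundary I
      = sInf {c : ℝ | ∃ W : Finset V, hValid boundary I W ∧ c = hCutWeight w W} := rfl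
  have hmem := (hEntropySet_nonempty w boundary I).csInf_mem (hEntropySet_finite w boundary I)
  obtain ⟨W, hW, hval⟩ := hmem
  exact ⟨W, hW, heq.trans hval⟩

lemma hCutWeight_nonneg (w : Finset V → ℝ) (hw : ∀ e, 0 ≤ w e) (W : Finset V) :
    0 ≤ hCutWeight w W := by
  apply Finset.sum_nonneg
  intro e _
  split
  · exact hw e
  · exact le_refl 0

lemma hCutWeight_empty (w : Finset V → ℝ) : hCutWeight w (∅ : Finset V) = 0 := by
  apply Finset.sum_eq_zero
  intro e _
  simp

lemma hValid_empty_cut (boundary : V → Option (Fin (n + 1))) :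
    hValid boundary (∅ : Finset (Fin n)) (∅ : Finset V) := by
  intro v j _
  simp

lemma hEntropy_empty (w : Finset V → ℝ) (hw : ∀ e, 0 ≤ w e)
    (boundary : V → Option (Fin (n + 1))) :
    hDiscreteEntropy w boundary (∅ : Finset (Fin n)) = 0 := by
  obtain ⟨W, hW, hval⟩ := hEntropy_exists_min w boundary (∅ : Finset (Fin n))
  have h1 : hDiscreteEntropy w boundary (∅ : Finset (Fin n)) ≤ 0 := by
    have := hEntropy_le w boundary ∅ ∅ (hValid_empty_cut boundary)
    rwa [hCutWeight_empty] at this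
  have h2 : 0 ≤ hDiscreteEntropy w boundary (∅ : Finset (Fin n)) := by
    rw [hval]; exact hCutWeight_nonneg w hw W
  linarith

end Aux

/-- Any entropy vector realizable by a hypergraph model on `n` parties is
realizable by a hypergraph model with at most `2^(2^n − 1)` vertices (the
universal hypergraph whose vertices are bit strings of length `2^n − 1`,
with aggregated hyperedge weights). -/
theorem hypergraph_vertex_bound {n : ℕ} (V : Type) [Fintype V] [DecidableEq V]
    (w : Finset V → ℝ) (hw : ∀ e, 0 ≤ w e)
    (boundary : V → Option (Fin (n + 1))) :
    ∃ (V' : Type) (i1 : Fintype V') (i2 : DecidableEq V')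
      (w' : Finset V' → ℝ) (boundary' : V' → Option (Fin (n + 1))),
      (∀ e, 0 ≤ w' e) ∧
      @Fintype.card V' i1 ≤ 2 ^ (2 ^ n - 1) ∧
      ∀ I : Finset (Fin n),
        @hDiscreteEntropy V' i1 i2 n w' boundary' I =
          hDiscreteEntropy w boundary I := by
  classical
  -- choose a minimal cut for each region
  choose Wc hWcValid hWcVal using hEntropy_exists_min w boundary
  -- the universal vertex type
  let K := {I : Finset (Fin n) // I ≠ ∅}
  let V' := K → Bool
  let f : V → V' := fun v I => decide (v ∈ Wc I.1)
  let p : Fin (n + 1) → V' := fun j I => decide (∃ i ∈ I.1, Fin.castSucc i = j)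
  let w' : Finset V' → ℝ := fun e' => ∑ e : Finset V, if e.image f = e' then w e else 0
  let boundary' : V' → Option (Fin (n + 1)) :=
    fun u => if h : ∃ j, p j = u then some h.choose else none
  have hw' : ∀ e', 0 ≤ w' e' := by
    intro e'
    apply Finset.sum_nonneg
    intro e _
    split
    · exact hw e
    · exact le_refl 0
  -- boundary vertices map to the canonical patterns
  have hfp : ∀ v j, boundary v = some j → f v = p j := by
    intro v j hj
    funext I
    exact decide_eq_decide.mpr (hWcValid I.1 v j hj)
  -- key computation of cut weights in the universal model
  have hcut' : ∀ W' : Finset V', hCutWeight w' W' =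
      ∑ e : Finset V,
        if ((e.image f ∩ W').Nonempty ∧ (e.image f \ W').Nonempty) then w e else 0 := by
    intro W'
    unfold hCutWeight
    have step1 : ∀ e' : Finset V',
        (if ((e' ∩ W').Nonempty ∧ (e' \ W').Nonempty) then w' e' else 0)
        = ∑ e : Finset V,
            if e.image f = e' ∧ ((e' ∩ W').Nonempty ∧ (e' \ W').Nonempty) then w e else 0 := by
      intro e'
      split_ifs with h
      · apply Finset.sum_congr rfl
        intro e _
        simp [h]
      · symm
        apply Finset.sum_eq_zero
        intro e _
        simp [h]
    rw [Finset.sum_congr rfl (fun e' _ => step1 e'), Finset.sum_comm]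
    apply Finset.sum_congr rfl
    intro e _
    simp only [ite_and]
    rw [Finset.sum_ite_eq]
    simp
  have hcross : ∀ (e : Finset V) (W' : Finset V'),
      (e.image f ∩ W').Nonempty ↔ ∃ v ∈ e, f v ∈ W' := by
    intro e W'
    constructor
    · rintro ⟨u, hu⟩
      rw [Finset.mem_inter] at hu
      obtain ⟨v, hv, rfl⟩ := Finset.mem_image.mp hu.1
      exact ⟨v, hv, hu.2⟩
    · rintro ⟨v, hv, h⟩
      exact ⟨f v, Finset.mem_inter.mpr ⟨Finset.mem_image_of_mem f hv, h⟩⟩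
  have hdiff : ∀ (e : Finset V) (W' : Finset V'),
      (e.image f \ W').Nonempty ↔ ∃ v ∈ e, f v ∉ W' := by
    intro e W'
    constructor
    · rintro ⟨u, hu⟩
      rw [Finset.mem_sdiff] at hu
      obtain ⟨v, hv, rfl⟩ := Finset.mem_image.mp hu.1
      exact ⟨v, hv, hu.2⟩
    · rintro ⟨v, hv, h⟩
      exact ⟨f v, Finset.mem_sdiff.mpr ⟨Finset.mem_image_of_mem f hv, h⟩⟩
  -- the cut weight of any universal cut equals the cut weight of its preimage
  have hpre : ∀ W' : Finset V',
      hCutWeight w' W' = hCutWeight w (Finset.univ.filter (fun v => f v ∈ W')) := by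
    intro W'
    rw [hcut' W']
    unfold hCutWeight
    apply Finset.sum_congr rfl
    intro e _
    have h1 : (e ∩ Finset.univ.filter (fun v => f v ∈ W')).Nonempty ↔ ∃ v ∈ e, f v ∈ W' := by
      constructor
      · rintro ⟨v, hv⟩
        rw [Finset.mem_inter, Finset.mem_filter] at hv
        exact ⟨v, hv.1, hv.2.2⟩
      · rintro ⟨v, hv, h⟩
        exact ⟨v, Finset.mem_inter.mpr ⟨hv, Finset.mem_filter.mpr ⟨Finset.mem_univ v, h⟩⟩⟩
    have h2 : (e \ Finset.univ.filter (fun v => f v ∈ W')).Nonempty ↔ ∃ v ∈ e, f v ∉ W' := by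
      constructor
      · rintro ⟨v, hv⟩
        rw [Finset.mem_sdiff, Finset.mem_filter] at hv
        exact ⟨v, hv.1, fun h => hv.2 ⟨Finset.mem_univ v, h⟩⟩
      · rintro ⟨v, hv, h⟩
        refine ⟨v, Finset.mem_sdiff.mpr ⟨hv, fun hc => h (Finset.mem_filter.mp hc).2⟩⟩
    rw [if_congr (and_congr ((hcross e W').trans h1.symm) ((hdiff e W').trans h2.symm)) rfl rfl]
  -- validity of preimage cuts
  have hpreValid : ∀ (I : Finset (Fin n)) (W' : Finset V'), hValid boundary' I W' →
      hValid boundary I (Finset.univ.filter (fun v => f v ∈ W')) := by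
    intro I W' hW' v j hj
    have hfv : f v = p j := hfp v j hj
    have hex : ∃ j', p j' = p j := ⟨j, rfl⟩
    have hb : boundary' (p j) = some hex.choose := dif_pos hex
    have hiff := hW' (p j) hex.choose hb
    have hpp : p hex.choose = p j := hex.choose_spec
    have htrans : (∃ i ∈ I, Fin.castSucc i = hex.choose) ↔ (∃ i ∈ I, Fin.castSucc i = j) := by
      by_cases hI : I = ∅
      · subst hI; simp
      · have := congrFun hpp ⟨I, hI⟩
        simpa [p, decide_eq_decide] using this
    simp only [Finset.mem_filter, Finset.mem_univ, true_and, hfv]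
    exact hiff.trans htrans
  refine ⟨V', inferInstance, inferInstance, w', boundary', hw', ?_, ?_⟩
  · -- cardinality bound
    have hK : Fintype.card K = 2 ^ n - 1 := by
      have h1 : Fintype.card K = Fintype.card (Finset (Fin n)) -
          Fintype.card {I : Finset (Fin n) // I = ∅} := Fintype.card_subtype_compl _
      rw [h1, Fintype.card_subtype_eq, Fintype.card_finset, Fintype.card_fin]
    have : Fintype.card V' = 2 ^ (2 ^ n - 1) := by
      rw [show Fintype.card V' = Fintype.card Bool ^ Fintype.card K from Fintype.card_fun,
        hK, Fintype.card_bool]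
    exact this.le
  · intro I
    by_cases hI : I = ∅
    · subst hI
      rw [hEntropy_empty w hw boundary, hEntropy_empty w' hw' boundary']
    · -- I nonempty
      apply le_antisymm
      · -- universal entropy ≤ original entropy, via image of minimal cut
        set W'I : Finset V' := Finset.univ.filter (fun u : V' => u ⟨I, hI⟩ = true) with hW'Idef
        have hfmem : ∀ v, f v ∈ W'I ↔ v ∈ Wc I := by
          intro v
          simp [hW'Idef, f]
        have hvalid'I : hValid boundary' I W'I := by
          intro u j hj
          simp only [boundary'] at hj
          split at hj
          · next h =>
            have hj' : h.choose = j := Option.some_injective _ hj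
            have hcf := congrFun h.choose_spec (⟨I, hI⟩ : K)
            rw [← hj']
            simp only [hW'Idef, Finset.mem_filter, Finset.mem_univ, true_and, ← hcf]
            simp [p]
          · exact absurd hj (by simp)
        have hvalcut : hCutWeight w' W'I = hCutWeight w (Wc I) := by
          rw [hpre W'I]
          congr 1
          ext v
          simp [hfmem v]
        calc hDiscreteEntropy w' boundary' I ≤ hCutWeight w' W'I :=
              hEntropy_le w' boundary' I W'I hvalid'I
          _ = hCutWeight w (Wc I) := hvalcut
          _ = hDiscreteEntropy w boundary I := (hWcVal I).symm
      · -- original entropy ≤ universal entropy, via preimage of minimal cut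
        obtain ⟨W'm, hW'mValid, hW'mVal⟩ := hEntropy_exists_min w' boundary' I
        calc hDiscreteEntropy w boundary I
            ≤ hCutWeight w (Finset.univ.filter (fun v => f v ∈ W'm)) :=
              hEntropy_le w boundary I _ (hpreValid I W'm hW'mValid)
          _ = hCutWeight w' W'm := (hpre W'm).symm
          _ = hDiscreteEntropy w' boundary' I := hW'mVal.symm
end

section
/- The entropy vector of the state |ψ⟩ = (1/3)∑_{i,j=0}^{2} |i⟩_A |j⟩_B |i⊕j⟩_C |i⊕2j⟩_D (arithmetic mod 3) on four qutrits satisfies S(X) = log 3 for each single party X ∈ {A,B,C,D} and S(XY) = 2 log 3 for each pair, i.e., it is a 4-party absolutely maximally entangled state. -/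
open scoped Classical in
/-- Reduced density matrix of the pure state `ψ` on the subsystem `s`, padded
with zero rows/columns: indices are full configurations, required to be `0`
outside `s`; the entry is the partial trace over the complement of `s` of
`|ψ⟩⟨ψ|`.  Padding by zeros does not affect the von Neumann entropy. -/
noncomputable def reducedMatrix {n D : ℕ} [NeZero D]
    (ψ : (Fin n → Fin D) → ℂ) (s : Finset (Fin n)) :
    Matrix (Fin n → Fin D) (Fin n → Fin D) ℂ :=
  fun a b =>
    if (∀ i, i ∉ s → a i = 0 ∧ b i = 0) then
      ∑ c : Fin n → Fin D,
        if (∀ i ∈ s, c i = 0) then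
          ψ (fun i => if i ∈ s then a i else c i) *
            (starRingEnd ℂ) (ψ (fun i => if i ∈ s then b i else c i))
        else 0
    else 0

open scoped Classical in
/-- Von Neumann entropy `S(ρ) = −∑ λ log λ` of a (Hermitian) matrix, via its
eigenvalues (with the convention `0 · log 0 = 0`). -/
noncomputable def vonNeumannEntropy {ι : Type} [Fintype ι] [DecidableEq ι]
    (ρ : Matrix ι ι ℂ) : ℝ :=
  if h : ρ.IsHermitian then
    -∑ i, h.eigenvalues i * Real.log (h.eigenvalues i)
  else 0

/-- The four-qutrit perfect-tensor state
`|ψ⟩ = (1/3) ∑_{i,j} |i⟩_A |j⟩_B |i⊕j⟩_C |i⊕2j⟩_D` (mod 3). -/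
noncomputable def perfectTensorState : (Fin 4 → Fin 3) → ℂ :=
  fun v => if v 2 = v 0 + v 1 ∧ v 3 = v 0 + 2 * v 1 then (1 / 3 : ℂ) else 0

/-!
`perfectTensorState` is the uniform superposition, with amplitude `1/3`, of the nine codewords
`(i, j, i + j, i + 2j)` of a ternary MDS code: any two coordinates of a codeword determine it.
If `s` has at most two parties, its complement still contains two coordinates, so two codewords
agreeing outside `s` are equal and the reduced matrix on `s` is diagonal. Its entry at a
configuration `a` of `s` is `1/9` times the number of codewords extending `a`, which is
`9 / 3 ^ #s`. The marginal is therefore maximally mixed on the `3 ^ #s` configurations of `s`,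
and its entropy is `#s * log 3`.
-/

open Matrix Polynomial Finset

section Diagonal

variable {ι : Type} [Fintype ι] [DecidableEq ι]

theorem Matrix.IsHermitian.map_eigenvalues_diagonal (d : ι → ℝ)
    (hd : (diagonal fun i => (d i : ℂ)).IsHermitian) :
    univ.val.map hd.eigenvalues = univ.val.map d := by
  have h := hd.roots_charpoly_eq_eigenvalues
  rw [charpoly_diagonal, roots_prod _ _ (by simp [prod_ne_zero_iff, X_sub_C_ne_zero])] at h
  simp only [roots_X_sub_C, Multiset.bind_singleton, Complex.coe_algebraMap,
    Function.comp_apply] at h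
  refine Multiset.map_injective Complex.ofReal_injective ?_
  simpa only [Multiset.map_map, Function.comp_apply] using h.symm

theorem vonNeumannEntropy_diagonal (d : ι → ℝ) :
    vonNeumannEntropy (diagonal fun i => (d i : ℂ)) = -∑ i, d i * Real.log (d i) := by
  have hd : (diagonal fun i => (d i : ℂ)).IsHermitian :=
    isHermitian_diagonal_of_self_adjoint _ (by ext; simp)
  have h := congrArg (fun m => (m.map fun x => x * Real.log x).sum) hd.map_eigenvalues_diagonal
  simp only [Multiset.map_map, Function.comp_def, sum_map_val] at h
  rw [vonNeumannEntropy, dif_pos hd, h]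

theorem vonNeumannEntropy_diagonal_uniform (S : Finset ι) :
    vonNeumannEntropy (diagonal fun i => ((if i ∈ S then (#S : ℝ)⁻¹ else 0 : ℝ) : ℂ)) =
      Real.log #S := by
  rw [vonNeumannEntropy_diagonal]
  simp only [apply_ite (fun x : ℝ => x * Real.log x), zero_mul, sum_ite_mem, univ_inter,
    sum_const, nsmul_eq_mul, Real.log_inv]
  rcases eq_or_ne (#S : ℝ) 0 with h | h
  · simp [h]
  · field_simp

end Diagonal

theorem Finset.piecewise_eq_right_of_eqOn {ι : Type*} {π : ι → Type*} {s : Finset ι}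
    [∀ i, Decidable (i ∈ s)] {f g : ∀ i, π i} (h : ∀ i ∈ s, f i = g i) :
    s.piecewise f g = g := by
  rw [s.piecewise_congr h fun _ _ => rfl, piecewise_same]

section CodeState

variable {n D : ℕ}

def codeState (C : Finset (Fin n → Fin D)) (α : ℝ) : (Fin n → Fin D) → ℂ :=
  fun v => if v ∈ C then (α : ℂ) else 0

variable [NeZero D]

def supportedConfigs (s : Finset (Fin n)) : Finset (Fin n → Fin D) :=
  {a | ∀ i ∉ s, a i = 0}

theorem card_supportedConfigs (s : Finset (Fin n)) :
    #(supportedConfigs (D := D) s) = D ^ #s := by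
  have : supportedConfigs (D := D) s =
      Fintype.piFinset fun i => if i ∈ s then univ else {0} := by
    ext a
    simp only [supportedConfigs, mem_filter, mem_univ, true_and, Fintype.mem_piFinset]
    refine forall_congr' fun i => ?_
    split_ifs <;> simp [*]
  simp [this, Fintype.card_piFinset, apply_ite card, prod_ite_mem]

theorem reducedMatrix_apply (ψ : (Fin n → Fin D) → ℂ) (s : Finset (Fin n))
    (a b : Fin n → Fin D) :
    reducedMatrix ψ s a b =
      if ∀ i ∉ s, a i = 0 ∧ b i = 0 then
        ∑ c : Fin n → Fin D,
          if ∀ i ∈ s, c i = 0 then ψ (s.piecewise a c) * starRingEnd ℂ (ψ (s.piecewise b c))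
          else 0
      else 0 :=
  rfl

theorem card_filter_piecewise_mem (C : Finset (Fin n → Fin D)) (s : Finset (Fin n))
    (a : Fin n → Fin D) :
    #{c : Fin n → Fin D | (∀ i ∈ s, c i = 0) ∧ s.piecewise a c ∈ C} =
      #{v ∈ C | ∀ i ∈ s, v i = a i} := by
  refine card_nbij' (fun c => s.piecewise a c) (fun v => s.piecewise 0 v) ?_ ?_ ?_ ?_
  · intro c hc
    simp_all [piecewise_eq_of_mem]
  · intro v hv
    simp only [coe_filter, Set.mem_ofPred_eq, mem_univ, true_and] at hv ⊢
    refine ⟨fun i hi => piecewise_eq_of_mem _ _ _ hi, ?_⟩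
    rw [piecewise_idem_right, piecewise_eq_right_of_eqOn fun i hi => (hv.2 i hi).symm]
    exact hv.1
  · intro c hc
    simp only [coe_filter, Set.mem_ofPred_eq, mem_univ, true_and] at hc
    dsimp only
    rw [piecewise_idem_right]
    exact piecewise_eq_right_of_eqOn fun i hi => (hc.1 i hi).symm
  · intro v hv
    simp only [coe_filter, Set.mem_ofPred_eq] at hv
    dsimp only
    rw [piecewise_idem_right, piecewise_eq_right_of_eqOn fun i hi => (hv.2 i hi).symm]

theorem reducedMatrix_codeState_eq_diagonal (C : Finset (Fin n → Fin D)) (α : ℝ)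
    (s : Finset (Fin n)) (K : ℕ)
    (hdet : ∀ v ∈ C, ∀ w ∈ C, (∀ i ∉ s, v i = w i) → v = w)
    (hK : ∀ a : Fin n → Fin D, #{v ∈ C | ∀ i ∈ s, v i = a i} = K) :
    reducedMatrix (codeState C α) s =
      diagonal fun a => ((if a ∈ supportedConfigs s then α ^ 2 * K else 0 : ℝ) : ℂ) := by
  ext a b
  have hterm : ∀ c : Fin n → Fin D,
      (if ∀ i ∈ s, c i = 0 then
        (if s.piecewise a c ∈ C then (α : ℂ) else 0) *
          starRingEnd ℂ (if s.piecewise b c ∈ C then (α : ℂ) else 0)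
        else 0) =
      if (∀ i ∈ s, c i = 0) ∧ s.piecewise a c ∈ C ∧ s.piecewise b c ∈ C then
        ((α ^ 2 : ℝ) : ℂ) else 0 := by
    intro c
    split_ifs <;> simp_all [sq]
  simp only [reducedMatrix_apply, codeState, hterm, sum_ite, sum_const_zero, add_zero,
    sum_const, nsmul_eq_mul, diagonal_apply]
  by_cases hab : a = b
  · subst hab
    simp only [and_self, supportedConfigs, mem_filter, mem_univ, true_and, if_true,
      card_filter_piecewise_mem, hK]
    split_ifs <;> push_cast <;> ring
  · rw [if_neg hab]
    split_ifs with hsupp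
    · rw [filter_eq_empty_iff.mpr, card_empty, Nat.cast_zero, zero_mul]
      rintro c - ⟨-, hac, hbc⟩
      apply hab
      have hmix := hdet _ hac _ hbc fun i hi => by simp [piecewise_eq_of_notMem _ _ _ hi]
      funext i
      by_cases hi : i ∈ s
      · simpa [piecewise_eq_of_mem _ _ _ hi] using congrFun hmix i
      · rw [(hsupp i hi).1, (hsupp i hi).2]
    · rfl

theorem vonNeumannEntropy_reducedMatrix_codeState (C : Finset (Fin n → Fin D)) (α : ℝ)
    (s : Finset (Fin n)) (K : ℕ)
    (hdet : ∀ v ∈ C, ∀ w ∈ C, (∀ i ∉ s, v i = w i) → v = w)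
    (hK : ∀ a : Fin n → Fin D, #{v ∈ C | ∀ i ∈ s, v i = a i} = K)
    (hnorm : α ^ 2 * K * D ^ #s = 1) :
    vonNeumannEntropy (reducedMatrix (codeState C α) s) = #s * Real.log D := by
  have hentry : α ^ 2 * K = (#(supportedConfigs (D := D) s) : ℝ)⁻¹ := by
    rw [card_supportedConfigs, Nat.cast_pow]
    exact eq_inv_of_mul_eq_one_left hnorm
  rw [reducedMatrix_codeState_eq_diagonal C α s K hdet hK, hentry,
    vonNeumannEntropy_diagonal_uniform, card_supportedConfigs, Nat.cast_pow, Real.log_pow]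

end CodeState

section PerfectCode

def perfectCode : Finset (Fin 4 → Fin 3) := {v | v 2 = v 0 + v 1 ∧ v 3 = v 0 + 2 * v 1}

theorem perfectTensorState_eq : perfectTensorState = codeState perfectCode 3⁻¹ := by
  funext v
  simp [perfectTensorState, codeState, perfectCode]

theorem card_perfectCode_filter_pair :
    ∀ X Y : Fin 4, X ≠ Y → ∀ x y : Fin 3,
      #{v ∈ perfectCode | v X = x ∧ v Y = y} = 1 := by
  decide

theorem card_perfectCode_filter_single (X : Fin 4) (x : Fin 3) :
    #{v ∈ perfectCode | v X = x} = 3 := by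
  obtain ⟨Y, hXY⟩ := exists_ne X
  rw [card_eq_sum_card_fiberwise (f := fun v => v Y) (t := univ) fun _ _ => mem_univ _]
  simp [filter_filter, card_perfectCode_filter_pair X Y hXY.symm]

theorem perfectCode_eq_of_eqOn_compl {s : Finset (Fin 4)} (hs : #s ≤ 2) :
    ∀ v ∈ perfectCode, ∀ w ∈ perfectCode, (∀ i ∉ s, v i = w i) → v = w := by
  intro v hv w hw hvw
  have hcompl : 1 < #sᶜ := by
    rw [card_compl, Fintype.card_fin]
    omega
  obtain ⟨Z, hZ, W, hW, hZW⟩ := one_lt_card.mp hcompl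
  rw [mem_compl] at hZ hW
  have hunique := card_le_one.mp (card_perfectCode_filter_pair Z W hZW (v Z) (v W)).le
  exact hunique v (by simp [hv]) w (by simp [hw, hvw Z hZ, hvw W hW])

end PerfectCode

/-- The state `|ψ⟩ = (1/3) ∑_{i,j} |i⟩|j⟩|i⊕j⟩|i⊕2j⟩` is AME(4,3): every
single-party marginal has entropy `log 3` and every two-party marginal has
entropy `2 log 3`. -/
theorem perfectTensor_is_AME :
    (∀ X : Fin 4,
      vonNeumannEntropy (reducedMatrix perfectTensorState {X}) = Real.log 3) ∧
    (∀ X Y : Fin 4, X ≠ Y →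
      vonNeumannEntropy (reducedMatrix perfectTensorState {X, Y}) =
        2 * Real.log 3) := by
  rw [perfectTensorState_eq]
  refine ⟨fun X => ?_, fun X Y hXY => ?_⟩
  · have := vonNeumannEntropy_reducedMatrix_codeState perfectCode 3⁻¹ {X} 3
      (perfectCode_eq_of_eqOn_compl (by simp))
      (fun a => by simpa using card_perfectCode_filter_single X (a X)) (by norm_num)
    simpa using this
  · have := vonNeumannEntropy_reducedMatrix_codeState perfectCode 3⁻¹ {X, Y} 1
      (perfectCode_eq_of_eqOn_compl (card_pair hXY).le)
      (fun a => by simpa using card_perfectCode_filter_pair X Y hXY (a X) (a Y))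
      (by norm_num [card_pair hXY])
    simpa [card_pair hXY] using this
end
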